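/- Let A be an amenable operator algebra. Then A has the total reduction property: for every continuous representation θ : A → B(H), every closed invariant subspace of H is topologically complemented by a closed invariant subspace. -/

import Mathlib

/-!
Let `P` be the orthogonal projection onto `V`. Invariance of `V` means `(1 - P) θ(a) P = 0`, so the
corners `a ↦ P θ(a) P` and `a ↦ (1 - P) θ(a) (1 - P)` are multiplicative and `a ↦ P θ(a) (1 - P)` is a
derivation between them. Seen in the bidual `B(H)**`, which is the dual of the `A`-bimodule `B(H)*`
built from the two corners, this derivation is inner by amenability. Restricting the implementing
functional to the vector functionals `T ↦ ⟪x, T y⟫` yields an operator `S` with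
`P θ(a) (1 - P) = P θ(a) P S - S (1 - P) θ(a) (1 - P)`. The idempotent `P + P S (1 - P)` onto `V` then
commutes with `θ`, and its kernel is an invariant complement of `V`.
-/

open ContinuousLinearMap NormedSpace
open scoped InnerProductSpace

noncomputable section

namespace IsIdempotentElem

variable {R : Type*} [Ring R] {p : R}

theorem compl_corner_mul (hp : IsIdempotentElem p) {x : R} (hx : (1 - p) * x * p = 0) (y : R) :
    (1 - p) * x * (1 - p) * ((1 - p) * y * (1 - p)) = (1 - p) * (x * y) * (1 - p) := by
  have hq : (1 - p) * (1 - p) = 1 - p := hp.one_sub.eq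
  calc (1 - p) * x * (1 - p) * ((1 - p) * y * (1 - p))
      = (1 - p) * x * ((1 - p) * (1 - p)) * y * (1 - p) := by noncomm_ring
    _ = (1 - p) * (x * y) * (1 - p) - (1 - p) * x * p * y * (1 - p) := by rw [hq]; noncomm_ring
    _ = _ := by rw [hx]; noncomm_ring

theorem corner_mul (hp : IsIdempotentElem p) (x : R) {y : R} (hy : (1 - p) * y * p = 0) :
    p * x * p * (p * y * p) = p * (x * y) * p := by
  calc p * x * p * (p * y * p) = p * x * (p * p) * y * p := by noncomm_ring
    _ = p * (x * y) * p - p * x * ((1 - p) * y * p) := by rw [hp.eq]; noncomm_ring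
    _ = _ := by rw [hy]; noncomm_ring

theorem corner_offDiag_mul (hp : IsIdempotentElem p) (x y : R) :
    p * (x * y) * (1 - p) =
      p * x * p * (p * y * (1 - p)) + p * x * (1 - p) * ((1 - p) * y * (1 - p)) := by
  have hq : (1 - p) * (1 - p) = 1 - p := hp.one_sub.eq
  calc p * (x * y) * (1 - p)
      = p * x * (p * p) * y * (1 - p) + p * x * ((1 - p) * (1 - p)) * y * (1 - p) := by
        rw [hp.eq, hq]; noncomm_ring
    _ = _ := by noncomm_ring

theorem commute_add_mul_mul (hp : IsIdempotentElem p) {x s : R} (hx : (1 - p) * x * p = 0)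
    (hs : p * x * (1 - p) = p * x * p * s - s * ((1 - p) * x * (1 - p))) :
    Commute (p + p * s * (1 - p)) x := by
  have hq : (1 - p) * (1 - p) = 1 - p := hp.one_sub.eq
  have hpxq : p * x * (1 - p) = p * x * p * s * (1 - p) - p * s * (1 - p) * x * (1 - p) :=
    calc p * x * (1 - p) = p * p * x * ((1 - p) * (1 - p)) := by rw [hp.eq, hq]
      _ = p * (p * x * (1 - p)) * (1 - p) := by noncomm_ring
      _ = p * p * x * p * s * (1 - p) - p * s * (1 - p) * x * ((1 - p) * (1 - p)) := by
        rw [hs]; noncomm_ring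
      _ = _ := by rw [hp.eq, hq]
  have hqx : (1 - p) * x = (1 - p) * x * (1 - p) :=
    calc (1 - p) * x = (1 - p) * x * p + (1 - p) * x * (1 - p) := by noncomm_ring
      _ = _ := by rw [hx, zero_add]
  have hxp : x * p = p * x * p :=
    calc x * p = p * x * p + (1 - p) * x * p := by noncomm_ring
      _ = _ := by rw [hx, add_zero]
  calc (p + p * s * (1 - p)) * x = p * x * p + p * x * (1 - p) + p * s * ((1 - p) * x) := by
        noncomm_ring
    _ = x * p + x * p * s * (1 - p) := by rw [hpxq, hqx, hxp]; noncomm_ring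
    _ = x * (p + p * s * (1 - p)) := by noncomm_ring

end IsIdempotentElem

section DualBimodule

variable {𝕜 B : Type*} [NontriviallyNormedField 𝕜] [SeminormedRing B] [NormedAlgebra 𝕜 B]

variable (𝕜 B) in
def dualMulLeft : B →L[𝕜] StrongDual 𝕜 B →L[𝕜] StrongDual 𝕜 B :=
  (compL 𝕜 B B 𝕜).flip ∘L mul 𝕜 B

variable (𝕜 B) in
def dualMulRight : B →L[𝕜] StrongDual 𝕜 B →L[𝕜] StrongDual 𝕜 B :=
  (compL 𝕜 B B 𝕜).flip ∘L (mul 𝕜 B).flip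

@[simp] theorem dualMulLeft_apply (u : B) (ω : StrongDual 𝕜 B) (v : B) :
    dualMulLeft 𝕜 B u ω v = ω (u * v) := rfl

@[simp] theorem dualMulRight_apply (u : B) (ω : StrongDual 𝕜 B) (v : B) :
    dualMulRight 𝕜 B u ω v = ω (v * u) := rfl

theorem dualMulLeft_mul (u v : B) :
    dualMulLeft 𝕜 B (u * v) = dualMulLeft 𝕜 B v ∘L dualMulLeft 𝕜 B u := by
  ext ω w; simp [mul_assoc]

theorem dualMulRight_mul (u v : B) :
    dualMulRight 𝕜 B (u * v) = dualMulRight 𝕜 B u ∘L dualMulRight 𝕜 B v := by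
  ext ω w; simp [mul_assoc]

theorem dualMulRight_comp_dualMulLeft (u v : B) :
    dualMulRight 𝕜 B u ∘L dualMulLeft 𝕜 B v = dualMulLeft 𝕜 B v ∘L dualMulRight 𝕜 B u := by
  ext ω w; simp [mul_assoc]

theorem inclusionInDoubleDual_comp_dualMulLeft (t u : B) :
    inclusionInDoubleDual 𝕜 B t ∘L dualMulLeft 𝕜 B u = inclusionInDoubleDual 𝕜 B (u * t) := by
  ext ω; simp

theorem inclusionInDoubleDual_comp_dualMulRight (t u : B) :
    inclusionInDoubleDual 𝕜 B t ∘L dualMulRight 𝕜 B u = inclusionInDoubleDual 𝕜 B (t * u) := by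
  ext ω; simp

end DualBimodule

section VectorFunctional

variable {H : Type*} [NormedAddCommGroup H] [InnerProductSpace ℂ H]

def vectorFunctional (x y : H) : StrongDual ℂ (H →L[ℂ] H) :=
  innerSL ℂ x ∘L apply ℂ H y

@[simp] theorem vectorFunctional_apply (x y : H) (T : H →L[ℂ] H) :
    vectorFunctional x y T = ⟪x, T y⟫_ℂ := rfl

theorem norm_vectorFunctional_le (x y : H) : ‖vectorFunctional x y‖ ≤ ‖x‖ * ‖y‖ := by
  refine opNorm_le_bound _ (by positivity) fun T => ?_
  calc ‖⟪x, T y⟫_ℂ‖ ≤ ‖x‖ * ‖T y‖ := norm_inner_le_norm _ _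
    _ ≤ ‖x‖ * (‖T‖ * ‖y‖) := by gcongr; exact T.le_opNorm y
    _ = ‖x‖ * ‖y‖ * ‖T‖ := by ring

theorem dualMulRight_vectorFunctional (g : H →L[ℂ] H) (x y : H) :
    dualMulRight ℂ _ g (vectorFunctional x y) = vectorFunctional x (g y) := by
  ext T; simp

theorem dualMulLeft_vectorFunctional [CompleteSpace H] (g : H →L[ℂ] H) (x y : H) :
    dualMulLeft ℂ _ g (vectorFunctional x y) = vectorFunctional (adjoint g x) y := by
  ext T; simp [adjoint_inner_left]

theorem ext_vectorFunctional {S T : H →L[ℂ] H}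
    (h : ∀ x y, vectorFunctional x y S = vectorFunctional x y T) : S = T :=
  ext fun y => ext_inner_left ℂ fun x => h x y

variable [CompleteSpace H]

def bidualSesqForm (f : StrongDual ℂ (StrongDual ℂ (H →L[ℂ] H))) : H →L⋆[ℂ] H →L[ℂ] ℂ :=
  LinearMap.mkContinuous₂
    (LinearMap.mk₂'ₛₗ (starRingEnd ℂ) (RingHom.id ℂ) (fun x y => f (vectorFunctional x y))
      (fun x x' y => by rw [← map_add]; congr 1; ext T; simp)
      (fun c x y => by rw [← map_smul]; congr 1; ext T; simp [mul_comm])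
      (fun x y y' => by rw [← map_add]; congr 1; ext T; simp)
      (fun c x y => by rw [← map_smul]; congr 1; ext T; simp))
    ‖f‖ fun x y => by
      calc ‖f (vectorFunctional x y)‖ ≤ ‖f‖ * ‖vectorFunctional x y‖ := f.le_opNorm _
        _ ≤ ‖f‖ * (‖x‖ * ‖y‖) := by gcongr; exact norm_vectorFunctional_le x y
        _ = ‖f‖ * ‖x‖ * ‖y‖ := by ring

theorem exists_forall_apply_vectorFunctional (f : StrongDual ℂ (StrongDual ℂ (H →L[ℂ] H))) :
    ∃ S : H →L[ℂ] H, ∀ x y, f (vectorFunctional x y) = vectorFunctional x y S := by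
  refine ⟨adjoint (InnerProductSpace.continuousLinearMapOfBilin (bidualSesqForm f)), fun x y => ?_⟩
  rw [vectorFunctional_apply, adjoint_inner_right,
    InnerProductSpace.continuousLinearMapOfBilin_apply]
  rfl

theorem eq_mul_sub_mul_of_inclusionInDoubleDual_eq
    {f : StrongDual ℂ (StrongDual ℂ (H →L[ℂ] H))} {S : H →L[ℂ] H}
    (hS : ∀ x y, f (vectorFunctional x y) = vectorFunctional x y S) {t u v : H →L[ℂ] H}
    (h : inclusionInDoubleDual ℂ _ t = f ∘L dualMulLeft ℂ _ u - f ∘L dualMulRight ℂ _ v) :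
    t = u * S - S * v := by
  refine ext_vectorFunctional fun x y => ?_
  have := congr($h (vectorFunctional x y))
  simp only [dual_def, sub_apply, comp_apply, dualMulLeft_vectorFunctional,
    dualMulRight_vectorFunctional, hS] at this
  simpa [inner_sub_right, adjoint_inner_left] using this

end VectorFunctional

namespace Submodule

variable {𝕜 E : Type*} [RCLike 𝕜] [NormedAddCommGroup E] [InnerProductSpace 𝕜 E]
  (V : Submodule 𝕜 E) [V.HasOrthogonalProjection]

theorem one_sub_starProjection_mul_mul_starProjection {T : E →L[𝕜] E}
    (hT : ∀ x ∈ V, T x ∈ V) : (1 - V.starProjection) * T * V.starProjection = 0 := by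
  ext x
  simp [V.starProjection_eq_self_iff.mpr (hT _ (V.starProjection_apply_mem x))]

theorem isProj_starProjection_add_mul_mul (s : E →L[𝕜] E) :
    LinearMap.IsProj V
      ((V.starProjection + V.starProjection * s * (1 - V.starProjection) : E →L[𝕜] E) :
        E →ₗ[𝕜] E) where
  map_mem x := V.add_mem (V.starProjection_apply_mem x) (V.starProjection_apply_mem _)
  map_id x hx := by simp [V.starProjection_eq_self_iff.mpr hx]

end Submodule

end

universe u

theorem amenable_implies_totalReduction_general
    {A : Type u} [NormedRing A] [NormedAlgebra ℂ A]
    (hamen : ∀ (X : Type u) [NormedAddCommGroup X] [NormedSpace ℂ X],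
      ∀ L R : A →ₗ[ℂ] (X →L[ℂ] X), Continuous (⇑L) → Continuous (⇑R) →
      (∀ a b : A, L (a * b) = (L a).comp (L b)) →
      (∀ a b : A, R (a * b) = (R b).comp (R a)) →
      (∀ a b : A, (L a).comp (R b) = (R b).comp (L a)) →
      ∀ δ : A →ₗ[ℂ] (X →L[ℂ] ℂ), Continuous (⇑δ) →
      (∀ a b : A, δ (a * b) = (δ b).comp (R a) + (δ a).comp (L b)) →
      ∃ f : X →L[ℂ] ℂ, ∀ a : A, δ a = f.comp (R a) - f.comp (L a)) :
    ∀ (H : Type u) [NormedAddCommGroup H] [InnerProductSpace ℂ H] [CompleteSpace H],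
      ∀ θ : A →ₐ[ℂ] (H →L[ℂ] H), Continuous (⇑θ) →
      ∀ V : Submodule ℂ H, IsClosed (V : Set H) → (∀ a : A, ∀ x ∈ V, θ a x ∈ V) →
      ∃ W : Submodule ℂ H, IsClosed (W : Set H) ∧ (∀ a : A, ∀ x ∈ W, θ a x ∈ W) ∧
        V ⊓ W = ⊥ ∧ V ⊔ W = ⊤ := by
  intro H _ _ _ θ hθ V hV hVθ
  have : CompleteSpace V := hV.completeSpace_coe
  set P := V.starProjection
  have hP : IsIdempotentElem P := V.isIdempotentElem_starProjection
  have hθP (a : A) : (1 - P) * θ a * P = 0 :=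
    V.one_sub_starProjection_mul_mul_starProjection (hVθ a)
  let corner (u v : H →L[ℂ] H) : A →L[ℂ] H →L[ℂ] H := mulLeftRight ℂ _ u v ∘L ⟨θ.toLinearMap, hθ⟩
  have corner_apply (u v : H →L[ℂ] H) (a : A) : corner u v a = u * θ a * v := rfl
  obtain ⟨f, hf⟩ := hamen (StrongDual ℂ (H →L[ℂ] H))
    (dualMulRight ℂ _ ∘L corner (1 - P) (1 - P)) (dualMulLeft ℂ _ ∘L corner P P)
    (ContinuousLinearMap.continuous _) (ContinuousLinearMap.continuous _)
    (fun a b => by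
      simp only [coe_coe, comp_apply, corner_apply]
      rw [map_mul θ, ← hP.compl_corner_mul (hθP a), dualMulRight_mul])
    (fun a b => by
      simp only [coe_coe, comp_apply, corner_apply]
      rw [map_mul θ, ← hP.corner_mul _ (hθP b), dualMulLeft_mul])
    (fun a b => dualMulRight_comp_dualMulLeft _ _)
    (inclusionInDoubleDual ℂ _ ∘L corner P (1 - P)) (ContinuousLinearMap.continuous _)
    (fun a b => by
      simp only [coe_coe, comp_apply, corner_apply, inclusionInDoubleDual_comp_dualMulLeft,
        inclusionInDoubleDual_comp_dualMulRight]
      rw [map_mul θ, hP.corner_offDiag_mul, map_add])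
  obtain ⟨S, hS⟩ := exists_forall_apply_vectorFunctional f
  set Q : H →L[ℂ] H := P + P * S * (1 - P)
  have hQθ (a : A) : Commute Q (θ a) :=
    hP.commute_add_mul_mul (hθP a) (eq_mul_sub_mul_of_inclusionInDoubleDual_eq hS (hf a))
  have hQ : LinearMap.IsProj V (Q : H →ₗ[ℂ] H) := V.isProj_starProjection_add_mul_mul S
  refine ⟨LinearMap.ker (Q : H →ₗ[ℂ] H), Q.isClosed_ker, fun a x hx => ?_,
    hQ.isCompl.inf_eq_bot, hQ.isCompl.sup_eq_top⟩
  simp only [LinearMap.mem_ker, coe_coe] at hx ⊢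
  rw [← mul_apply_eq_comp, (hQθ a).eq, mul_apply_eq_comp, hx, map_zero]

/-- an amenable operator algebra (amenability: every continuous derivation
into the dual of any Banach `A`-bimodule is inner) has the total reduction property. -/
theorem amenable_implies_totalReduction
    {A : Type u} [NormedRing A] [NormedAlgebra ℂ A] [CompleteSpace A]
    (hamen : ∀ (X : Type u) [NormedAddCommGroup X] [NormedSpace ℂ X],
      ∀ L R : A →ₗ[ℂ] (X →L[ℂ] X), Continuous (⇑L) → Continuous (⇑R) →
      (∀ a b : A, L (a * b) = (L a).comp (L b)) →
      (∀ a b : A, R (a * b) = (R b).comp (R a)) →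
      (∀ a b : A, (L a).comp (R b) = (R b).comp (L a)) →
      ∀ δ : A →ₗ[ℂ] (X →L[ℂ] ℂ), Continuous (⇑δ) →
      (∀ a b : A, δ (a * b) = (δ b).comp (R a) + (δ a).comp (L b)) →
      ∃ f : X →L[ℂ] ℂ, ∀ a : A, δ a = f.comp (R a) - f.comp (L a)) :
    ∀ (H : Type u) [NormedAddCommGroup H] [InnerProductSpace ℂ H] [CompleteSpace H],
      ∀ θ : A →ₐ[ℂ] (H →L[ℂ] H), Continuous (⇑θ) →
      ∀ V : Submodule ℂ H, IsClosed (V : Set H) → (∀ a : A, ∀ x ∈ V, θ a x ∈ V) →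
      ∃ W : Submodule ℂ H, IsClosed (W : Set H) ∧ (∀ a : A, ∀ x ∈ W, θ a x ∈ W) ∧
        V ⊓ W = ⊥ ∧ V ⊔ W = ⊤ :=
  amenable_implies_totalReduction_general hamen
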